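/- Let S ≥ 1, D > 0, n ≥ 1. Let p̂ ∈ Δ^S be the average of n i.i.d. multinoulli trials with parameter p ∈ Δ^S. Define Δ_i := √( 3·p̂_i·log(4S)/n ) + 3·log(4S)/n, p⁻ := p̂ − Δ (coordinatewise), and let z be a random vector picked uniformly at random from the standard basis vectors {e_1, …, e_S}, independently of the trials; set p̃ := p⁻ + (1 − Σ_{i=1}^S p⁻_i)·z. Then for any fixed h ∈ [0,D]^S, Pr( p̃ᵀh ≤ pᵀh ) ≥ 1/(2S). -/

import Mathlib

/-!
Write `L = log (4S)`. The radius `Δ_i` is chosen so that Bennett's inequality for the binomial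
count `n p̂_i` (a Chernoff bound at `e^l = 1 + t / p_i`, with
`(1 + u) log (1 + u) - u ≥ u² / (2 + u)`) gives `P(p⁻_i > p_i) ≤ e^{-L} = 1/(4S)`, so by a union
bound `p⁻ ≤ p` coordinatewise with probability at least `3/4`. On that event, if `z` hits a
minimiser `k` of `h`, which happens with probability `1/S` independently, then `p̃` is `p⁻` with
its missing mass moved to `k`, hence `p̃ᵀh ≤ pᵀh`. So the probability is at least
`3/(4S) ≥ 1/(2S)`.
-/

open MeasureTheory ProbabilityTheory Finset

noncomputable section

/-- Law of a `Dirichlet(α)` random vector: the law of `(X i / ∑ j, X j) i` where the `X i`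
are independent with `X i ~ Gamma (α i) 1`. -/
def dirichletLaw {S : ℕ} (α : Fin S → ℝ) : Measure (Fin S → ℝ) :=
  (Measure.pi fun i => gammaMeasure (α i) 1).map (fun x i => x i / ∑ j, x j)

/-- The categorical (multinoulli) measure on `Fin S` with parameter `p`. -/
def catMeasure {S : ℕ} (p : Fin S → ℝ) : Measure (Fin S) :=
  ∑ i : Fin S, ENNReal.ofReal (p i) • Measure.dirac i

/-- Joint law of `n` i.i.d. multinoulli trials with parameter `p`. -/
def trialsLaw {S : ℕ} (p : Fin S → ℝ) (n : ℕ) : Measure (Fin n → Fin S) :=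
  Measure.pi fun _ : Fin n => catMeasure p

/-- The empirical distribution (the average `p̂` of the `n` multinoulli trials `x`). -/
def empDist {S n : ℕ} (x : Fin n → Fin S) (i : Fin S) : ℝ :=
  ((Finset.univ.filter fun j => x j = i).card : ℝ) / (n : ℝ)

/-- The downward-shifted empirical estimate `p⁻ i = p̂ i - Δ i` used in simple
optimistic sampling. -/
def pminus {S n : ℕ} (x : Fin n → Fin S) (i : Fin S) : ℝ :=
  empDist x i - (Real.sqrt (3 * empDist x i * Real.log (4 * S) / n) + 3 * Real.log (4 * S) / n)

/-- The simple optimistic sample: `p̃ = p⁻ + (1 - ∑ i, p⁻ i) • e_z` where `z` is the extra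
uniformly random coordinate. -/
def ptilde {S n : ℕ} (x : Fin n → Fin S) (z : Fin S) (i : Fin S) : ℝ :=
  pminus x i + (1 - ∑ j, pminus x j) * (if i = z then 1 else 0)

/-- Joint law of the `n` multinoulli trials together with an independent coordinate
`z` drawn uniformly from `{1, …, S}` (i.e., uniformly among the basis vectors). -/
def simpleLaw {S : ℕ} (p : Fin S → ℝ) (n : ℕ) : Measure ((Fin n → Fin S) × Fin S) :=
  (trialsLaw p n).prod (((S : ENNReal))⁻¹ • Measure.count)

open Real

lemma Real.sq_div_two_add_le_mul_log_one_add_sub {u : ℝ} (hu : 0 ≤ u) :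
    u ^ 2 / (2 + u) ≤ (1 + u) * log (1 + u) - u := by
  have hlog : 2 * u / (u + 2) ≤ log (1 + u) := le_log_one_add_of_nonneg hu
  have hid : (1 + u) * (2 * u / (u + 2)) - u = u ^ 2 / (2 + u) := by
    field_simp
    ring
  nlinarith

/-- The binomial Chernoff bound at the parameter `l = log (1 + t / r)`: Bennett's inequality. -/
lemma binomial_chernoff_at_log_one_add_div_le {r t : ℝ} (hr : 0 < r) (ht : 0 < t) (n : ℕ) :
    exp (-log (1 + t / r) * (n * (r + t))) * (1 + r * (exp (log (1 + t / r)) - 1)) ^ n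
      ≤ exp (-(n * t ^ 2 / (2 * r + t))) := by
  set u := t / r with hu
  have hu0 : 0 < u := div_pos ht hr
  have hru : r * u = t := by rw [hu]; field_simp
  have hmgf : (1 + r * (exp (log (1 + u)) - 1)) ^ n ≤ exp (n * t) := by
    rw [exp_log (by positivity), add_sub_cancel_left, hru, exp_nat_mul]
    exact pow_le_pow_left₀ (by positivity) (by linarith [add_one_le_exp t]) n
  have hexponent : n * t ^ 2 / (2 * r + t) ≤ n * r * ((1 + u) * log (1 + u) - u) := by
    have hsq : t ^ 2 / (2 * r + t) = r * (u ^ 2 / (2 + u)) := by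
      rw [← hru]; field_simp
    rw [mul_div_assoc, hsq, ← mul_assoc]
    exact mul_le_mul_of_nonneg_left (Real.sq_div_two_add_le_mul_log_one_add_sub hu0.le)
      (by positivity)
  calc exp (-log (1 + u) * (n * (r + t))) * (1 + r * (exp (log (1 + u)) - 1)) ^ n
      ≤ exp (-log (1 + u) * (n * (r + t))) * exp (n * t) := by gcongr
    _ = exp (-(n * r * ((1 + u) * log (1 + u) - u))) := by
      rw [← exp_add, ← hru]; ring_nf
    _ ≤ exp (-(n * t ^ 2 / (2 * r + t))) := by gcongr

lemma sum_mul_add_one_sub_sum_mul_le {ι : Type*} [Fintype ι] {p q h : ι → ℝ}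
    (hp : ∑ i, p i = 1) (hqp : ∀ i, q i ≤ p i) {k : ι} (hk : ∀ i, h k ≤ h i) :
    ∑ i, q i * h i + (1 - ∑ i, q i) * h k ≤ ∑ i, p i * h i := by
  have hnonneg : 0 ≤ ∑ i, (p i - q i) * (h i - h k) :=
    Finset.sum_nonneg fun i _ => mul_nonneg (sub_nonneg.2 (hqp i)) (sub_nonneg.2 (hk i))
  have hexpand : ∑ i, (p i - q i) * (h i - h k)
      = ∑ i, p i * h i - (∑ i, q i * h i + (1 - ∑ i, q i) * h k) := by
    simp only [sub_mul, mul_sub, Finset.sum_sub_distrib, ← Finset.sum_mul, hp]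
    ring
  linarith

/-- The paper's `Δ_i` as a function of `q = p̂_i`, with `L = log (4S)`. -/
def confRadius (L : ℝ) (n : ℕ) (q : ℝ) : ℝ := √(3 * q * L / n) + 3 * L / n

section ConfRadius

variable {L : ℝ} {n : ℕ}

lemma pminus_eq_sub_confRadius {S : ℕ} (x : Fin n → Fin S) (i : Fin S) :
    pminus x i = empDist x i - confRadius (log (4 * S)) n (empDist x i) := rfl

lemma confRadius_pos (hL : 0 < L) (hn : 0 < n) (q : ℝ) : 0 < confRadius L n q := by
  unfold confRadius
  positivity

lemma confRadius_mono (hL : 0 ≤ L) : Monotone (confRadius L n) := by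
  intro q q' hq
  unfold confRadius
  gcongr

lemma le_mul_sq_div_confRadius (hL : 0 < L) (hn : 0 < n) {r : ℝ} (hr : 0 ≤ r) :
    L ≤ n * confRadius L n r ^ 2 / (2 * r + confRadius L n r) := by
  have hrad := confRadius_pos hL hn r
  have hn' : (0 : ℝ) < n := by exact_mod_cast hn
  rw [le_div_iff₀ (by positivity)]
  set s := √(3 * r * L / n) with hs
  have hns : n * s ^ 2 = 3 * r * L := by
    rw [hs, sq_sqrt (by positivity)]
    field_simp
  have hs0 : 0 ≤ s := sqrt_nonneg _
  have hrad_eq : n * confRadius L n r = n * s + 3 * L := by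
    unfold confRadius
    rw [← hs]
    field_simp
  -- `n t² - L (2r + t) = r L + 5 L s + 6 L² / n` with `t = confRadius L n r`
  nlinarith [mul_nonneg hr hL.le, mul_nonneg hL.le hs0]

end ConfRadius

section Multinoulli

variable {S : ℕ} {p : Fin S → ℝ}

lemma catMeasure_singleton (s : Fin S) : catMeasure p {s} = ENNReal.ofReal (p s) := by
  simp [catMeasure, Measure.dirac_apply', Pi.single_apply]

lemma isProbabilityMeasure_catMeasure (hp : p ∈ stdSimplex ℝ (Fin S)) :
    IsProbabilityMeasure (catMeasure p) := by
  constructor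
  simp [catMeasure, ← ENNReal.ofReal_sum_of_nonneg fun i _ => hp.1 i, hp.2]

lemma integral_catMeasure (hp : p ∈ stdSimplex ℝ (Fin S)) (f : Fin S → ℝ) :
    ∫ s, f s ∂catMeasure p = ∑ s, p s * f s := by
  have := isProbabilityMeasure_catMeasure hp
  rw [integral_fintype .of_finite]
  simp [Measure.real, catMeasure_singleton, hp.1 _]

lemma isProbabilityMeasure_trialsLaw (hp : p ∈ stdSimplex ℝ (Fin S)) (n : ℕ) :
    IsProbabilityMeasure (trialsLaw p n) := by
  have := isProbabilityMeasure_catMeasure hp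
  rw [trialsLaw]
  infer_instance

lemma isProbabilityMeasure_simpleLaw (hS : 1 ≤ S) (hp : p ∈ stdSimplex ℝ (Fin S)) (n : ℕ) :
    IsProbabilityMeasure (simpleLaw p n) := by
  have := isProbabilityMeasure_trialsLaw hp n
  have : IsProbabilityMeasure ((S : ENNReal)⁻¹ • Measure.count : Measure (Fin S)) := by
    constructor
    simp only [Measure.smul_apply, Measure.count_univ, ENat.card_eq_coe_fintype_card,
      Fintype.card_fin, ENat.toENNReal_coe, smul_eq_mul]
    exact ENNReal.inv_mul_cancel (by exact_mod_cast (by omega : S ≠ 0)) (ENNReal.natCast_ne_top S)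
  rw [simpleLaw]
  infer_instance

lemma simpleLaw_real_prod_singleton (p : Fin S → ℝ) (n : ℕ) (E : Set (Fin n → Fin S))
    (z : Fin S) : (simpleLaw p n).real (E ×ˢ {z}) = (trialsLaw p n).real E / S := by
  simp [simpleLaw, Measure.real, Measure.prod_prod, div_eq_mul_inv]

lemma mgf_count_trialsLaw (hp : p ∈ stdSimplex ℝ (Fin S)) (n : ℕ) (i : Fin S) (l : ℝ) :
    mgf (fun x : Fin n → Fin S => (#{j | x j = i} : ℝ)) (trialsLaw p n) l
      = (1 + p i * (exp l - 1)) ^ n := by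
  have := isProbabilityMeasure_catMeasure hp
  have hprod : ∀ x : Fin n → Fin S,
      exp (l * #{j | x j = i}) = ∏ j, exp (l * if x j = i then 1 else 0) := by
    intro x
    rw [← exp_sum, ← Finset.mul_sum, Finset.sum_boole]
  have hterm : ∀ s, p s * exp (l * if s = i then 1 else 0)
      = p s + if s = i then p i * (exp l - 1) else 0 := by
    intro s
    split_ifs with hs <;> simp [hs]
    ring
  simp only [mgf, hprod, trialsLaw,
    integral_fintype_prod_eq_prod (fun _ s => exp (l * if s = i then 1 else 0)),
    integral_catMeasure hp, Finset.prod_const, Finset.card_univ, Fintype.card_fin, hterm,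
    Finset.sum_add_distrib, Finset.sum_ite_eq', Finset.mem_univ, if_true, hp.2]

lemma trialsLaw_real_count_ge_le (hp : p ∈ stdSimplex ℝ (Fin S)) (n : ℕ) (i : Fin S)
    (a : ℝ) {l : ℝ} (hl : 0 ≤ l) :
    (trialsLaw p n).real {x | a ≤ #{j | x j = i}}
      ≤ exp (-l * a) * (1 + p i * (exp l - 1)) ^ n := by
  have := isProbabilityMeasure_trialsLaw hp n
  rw [← mgf_count_trialsLaw hp]
  exact measure_ge_le_exp_mul_mgf a hl .of_finite

lemma trialsLaw_real_count_ge_le_bennett (hp : p ∈ stdSimplex ℝ (Fin S)) (n : ℕ) (i : Fin S)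
    {t : ℝ} (ht : 0 < t) :
    (trialsLaw p n).real {x | n * (p i + t) ≤ #{j | x j = i}}
      ≤ exp (-(n * t ^ 2 / (2 * p i + t))) := by
  rcases (hp.1 i).eq_or_lt with hpi | hpi
  · have := trialsLaw_real_count_ge_le hp n i (n * (p i + t)) zero_le_one
    rw [← hpi] at this ⊢
    refine this.trans_eq ?_
    simp only [zero_add, zero_mul, add_zero, mul_zero, one_pow, mul_one, neg_one_mul]
    field_simp
  · have hl : 0 ≤ log (1 + t / p i) := log_nonneg (by linarith [div_pos ht hpi])
    exact (trialsLaw_real_count_ge_le hp n i _ hl).trans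
      (binomial_chernoff_at_log_one_add_div_le hpi ht n)

end Multinoulli

section Pessimism

variable {S n : ℕ} {p : Fin S → ℝ}

lemma natCast_mul_empDist (hn : n ≠ 0) (x : Fin n → Fin S) (i : Fin S) :
    n * empDist x i = #{j | x j = i} := by
  rw [empDist]
  field_simp

lemma sum_ptilde_mul (x : Fin n → Fin S) (z : Fin S) (h : Fin S → ℝ) :
    ∑ i, ptilde x z i * h i = ∑ i, pminus x i * h i + (1 - ∑ i, pminus x i) * h z := by
  simp [ptilde, add_mul, Finset.sum_add_distrib]

lemma trialsLaw_real_lt_pminus_le (hS : 1 ≤ S) (hn : 1 ≤ n) (hp : p ∈ stdSimplex ℝ (Fin S))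
    (i : Fin S) : (trialsLaw p n).real {x | p i < pminus x i} ≤ 1 / (4 * S) := by
  have := isProbabilityMeasure_trialsLaw hp n
  have hS' : (1 : ℝ) ≤ S := by exact_mod_cast hS
  set L := log (4 * S)
  have hL : 0 < L := log_pos (by linarith)
  set t := confRadius L n (p i)
  have hsub : {x : Fin n → Fin S | p i < pminus x i} ⊆ {x | n * (p i + t) ≤ #{j | x j = i}} := by
    intro x hx
    simp only [Set.mem_ofPred_eq, pminus_eq_sub_confRadius] at hx ⊢
    have hq : p i ≤ empDist x i := by linarith [confRadius_pos hL hn (empDist x i)]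
    have ht : t ≤ confRadius L n (empDist x i) := confRadius_mono hL.le hq
    rw [← natCast_mul_empDist (by omega)]
    gcongr
    linarith
  calc (trialsLaw p n).real {x | p i < pminus x i}
      ≤ (trialsLaw p n).real {x | n * (p i + t) ≤ #{j | x j = i}} := measureReal_mono hsub
    _ ≤ exp (-(n * t ^ 2 / (2 * p i + t))) :=
        trialsLaw_real_count_ge_le_bennett hp n i (confRadius_pos hL hn _)
    _ ≤ exp (-L) := by gcongr; exact le_mul_sq_div_confRadius hL hn (hp.1 i)
    _ = 1 / (4 * S) := by rw [exp_neg, exp_log (by positivity), one_div]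

lemma three_quarters_le_trialsLaw_real_pminus_le (hS : 1 ≤ S) (hn : 1 ≤ n)
    (hp : p ∈ stdSimplex ℝ (Fin S)) :
    3 / 4 ≤ (trialsLaw p n).real {x | ∀ i, pminus x i ≤ p i} := by
  have := isProbabilityMeasure_trialsLaw hp n
  have hcompl : {x : Fin n → Fin S | ∀ i, pminus x i ≤ p i}ᶜ = ⋃ i, {x | p i < pminus x i} := by
    ext x
    simp
  have hbad : (trialsLaw p n).real {x | ∀ i, pminus x i ≤ p i}ᶜ ≤ 1 / 4 := by
    have hS' : (S : ℝ) ≠ 0 := by exact_mod_cast (by omega : S ≠ 0)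
    rw [hcompl]
    calc _ ≤ ∑ i, (trialsLaw p n).real {x | p i < pminus x i} :=
          measureReal_iUnion_fintype_le _
      _ ≤ ∑ _i : Fin S, 1 / (4 * (S : ℝ)) :=
          Finset.sum_le_sum fun i _ => trialsLaw_real_lt_pminus_le hS hn hp i
      _ = 1 / 4 := by
          simp only [sum_const, card_univ, Fintype.card_fin, nsmul_eq_mul]
          field_simp
  rw [measureReal_compl .of_discrete, probReal_univ] at hbad
  linarith

end Pessimism

theorem stmt_13_general (S n : ℕ) (hS : 1 ≤ S) (hn : 1 ≤ n)
    (p : Fin S → ℝ) (hp : p ∈ stdSimplex ℝ (Fin S))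
    (h : Fin S → ℝ) :
    ENNReal.ofReal (1 / (2 * S)) ≤
      simpleLaw p n
        {y | ∑ i, ptilde y.1 y.2 i * h i ≤ ∑ i, p i * h i} := by
  have := isProbabilityMeasure_simpleLaw hS hp n
  have : Nonempty (Fin S) := ⟨⟨0, hS⟩⟩
  obtain ⟨k, -, hk⟩ := Finset.exists_min_image univ h univ_nonempty
  set E := {x : Fin n → Fin S | ∀ i, pminus x i ≤ p i}
  have hsub : E ×ˢ {k} ⊆ {y | ∑ i, ptilde y.1 y.2 i * h i ≤ ∑ i, p i * h i} := by
    rintro ⟨x, z⟩ ⟨hx, rfl⟩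
    simpa only [Set.mem_ofPred_eq, sum_ptilde_mul] using
      sum_mul_add_one_sub_sum_mul_le hp.2 hx fun i => hk i (mem_univ i)
  rw [ENNReal.ofReal_le_iff_le_toReal (measure_ne_top _ _)]
  calc 1 / (2 * S) ≤ 3 / 4 / (S : ℝ) := by field_simp; norm_num
    _ ≤ (trialsLaw p n).real E / S := by
        gcongr
        exact three_quarters_le_trialsLaw_real_pminus_le hS hn hp
    _ = (simpleLaw p n).real (E ×ˢ {k}) := (simpleLaw_real_prod_singleton p n E k).symm
    _ ≤ _ := measureReal_mono hsub

/-- Pessimism of the simple optimistic sample (Lemma `biasSmallN` of the paper). -/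
theorem stmt_13 (S n : ℕ) (hS : 1 ≤ S) (hn : 1 ≤ n) (D : ℝ) (hD : 0 < D)
    (p : Fin S → ℝ) (hp : p ∈ stdSimplex ℝ (Fin S))
    (h : Fin S → ℝ) (hh : ∀ i, h i ∈ Set.Icc (0 : ℝ) D) :
    ENNReal.ofReal (1 / (2 * S)) ≤
      simpleLaw p n
        {y | ∑ i, ptilde y.1 y.2 i * h i ≤ ∑ i, p i * h i} :=
  stmt_13_general S n hS hn p hp h
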